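/- Fix real k₁, k₂ and complex z, z′. Define φ̃(x,y) = exp(−(1+2k₂)x²/4 − (1−2k₁)y²/4) · exp(((z′ + i z)x + (z + i z′)y)/√2) and Ψ̃(x,y) = exp(−(1−2k₂)x²/4 − (1+2k₁)y²/4) · exp(((z′ + i z)x + (z + i z′)y)/√2). Then identically on ℝ²: A φ̃ = z φ̃, A′ φ̃ = z′ φ̃, B† Ψ̃ = z Ψ̃, and B′† Ψ̃ = z′ Ψ̃. -/

import Mathlib

open MeasureTheory

/-- Partial derivative in the `x`-direction of a function on `ℝ²`. -/
noncomputable def pdx (f : ℝ × ℝ → ℂ) : ℝ × ℝ → ℂ := fun p => fderiv ℝ f p (1, 0)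

/-- Partial derivative in the `y`-direction of a function on `ℝ²`. -/
noncomputable def pdy (f : ℝ × ℝ → ℂ) : ℝ × ℝ → ℂ := fun p => fderiv ℝ f p (0, 1)

/-- `A f = (1/√2)(−i ∂ₓ f + ∂_y f + (−(i x/2)(1+2k₂) + (y/2)(1−2k₁)) f)`. -/
noncomputable def Agll (k₁ k₂ : ℝ) (f : ℝ × ℝ → ℂ) : ℝ × ℝ → ℂ := fun p =>
  (Real.sqrt 2 : ℂ)⁻¹ * (-Complex.I * pdx f p + pdy f p +
    (-(Complex.I * (p.1 : ℂ) / 2) * (1 + 2 * (k₂ : ℂ)) +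
      ((p.2 : ℂ) / 2) * (1 - 2 * (k₁ : ℂ))) * f p)

/-- `A′ f = (1/√2)(∂ₓ f − i ∂_y f + ((x/2)(1+2k₂) − (i y/2)(1−2k₁)) f)`. -/
noncomputable def A'gll (k₁ k₂ : ℝ) (f : ℝ × ℝ → ℂ) : ℝ × ℝ → ℂ := fun p =>
  (Real.sqrt 2 : ℂ)⁻¹ * (pdx f p - Complex.I * pdy f p +
    (((p.1 : ℂ) / 2) * (1 + 2 * (k₂ : ℂ)) -
      (Complex.I * (p.2 : ℂ) / 2) * (1 - 2 * (k₁ : ℂ))) * f p)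

/-- `B† f = (1/√2)(−i ∂ₓ f + ∂_y f + (−(i x/2)(1−2k₂) + (y/2)(1+2k₁)) f)`. -/
noncomputable def Bdag (k₁ k₂ : ℝ) (f : ℝ × ℝ → ℂ) : ℝ × ℝ → ℂ := fun p =>
  (Real.sqrt 2 : ℂ)⁻¹ * (-Complex.I * pdx f p + pdy f p +
    (-(Complex.I * (p.1 : ℂ) / 2) * (1 - 2 * (k₂ : ℂ)) +
      ((p.2 : ℂ) / 2) * (1 + 2 * (k₁ : ℂ))) * f p)

/-- `B′† f = (1/√2)(∂ₓ f − i ∂_y f + ((x/2)(1−2k₂) − (i y/2)(1+2k₁)) f)`. -/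
noncomputable def B'dag (k₁ k₂ : ℝ) (f : ℝ × ℝ → ℂ) : ℝ × ℝ → ℂ := fun p =>
  (Real.sqrt 2 : ℂ)⁻¹ * (pdx f p - Complex.I * pdy f p +
    (((p.1 : ℂ) / 2) * (1 - 2 * (k₂ : ℂ)) -
      (Complex.I * (p.2 : ℂ) / 2) * (1 + 2 * (k₁ : ℂ))) * f p)

/-- `φ̃(x,y) = exp(−(1+2k₂)x²/4 − (1−2k₁)y²/4) · exp(((z′+iz)x + (z+iz′)y)/√2)`. -/
noncomputable def phiTil (k₁ k₂ : ℝ) (z z' : ℂ) : ℝ × ℝ → ℂ := fun p =>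
  Complex.exp (-(1 + 2 * (k₂ : ℂ)) * (p.1 : ℂ) ^ 2 / 4 -
      (1 - 2 * (k₁ : ℂ)) * (p.2 : ℂ) ^ 2 / 4) *
    Complex.exp (((z' + Complex.I * z) * (p.1 : ℂ) +
      (z + Complex.I * z') * (p.2 : ℂ)) / (Real.sqrt 2 : ℂ))

/-- `Ψ̃(x,y) = exp(−(1−2k₂)x²/4 − (1+2k₁)y²/4) · exp(((z′+iz)x + (z+iz′)y)/√2)`. -/
noncomputable def psiTil (k₁ k₂ : ℝ) (z z' : ℂ) : ℝ × ℝ → ℂ := fun p =>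
  Complex.exp (-(1 - 2 * (k₂ : ℂ)) * (p.1 : ℂ) ^ 2 / 4 -
      (1 + 2 * (k₁ : ℂ)) * (p.2 : ℂ) ^ 2 / 4) *
    Complex.exp (((z' + Complex.I * z) * (p.1 : ℂ) +
      (z + Complex.I * z') * (p.2 : ℂ)) / (Real.sqrt 2 : ℂ))

/-!
Both `φ̃` and `Ψ̃` are exponentials `exp (a x² + b y² + c x + d y)` of a quadratic polynomial, so
`∂ₓ` and `∂_y` act on them as multiplication by `2 a x + c` and `2 b y + d`. The quadratic
coefficients are exactly those for which the terms linear in `x` and `y` cancel against the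
multiplicative parts of `A` and `A′`, leaving the constants `(-i c + d)/√2 = z` and
`(c - i d)/√2 = z'`. Replacing `(k₁, k₂)` by `(-k₁, -k₂)` turns `A, A′, φ̃` into `B†, B′†, Ψ̃`.
-/

open Complex

noncomputable def quadExp (a b c d : ℂ) : ℝ × ℝ → ℂ := fun q =>
  exp (a * (q.1 : ℂ) ^ 2 + b * (q.2 : ℂ) ^ 2 + c * q.1 + d * q.2)

theorem fderiv_quadExp_apply (a b c d : ℂ) (p v : ℝ × ℝ) :
    fderiv ℝ (quadExp a b c d) p v =
      ((2 * a * p.1 + c) * v.1 + (2 * b * p.2 + d) * v.2) * quadExp a b c d p := by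
  have hX : HasFDerivAt (fun q : ℝ × ℝ => (q.1 : ℂ)) (ofRealCLM.comp (.fst ℝ ℝ ℝ)) p :=
    ofRealCLM.hasFDerivAt.comp p hasFDerivAt_fst
  have hY : HasFDerivAt (fun q : ℝ × ℝ => (q.2 : ℂ)) (ofRealCLM.comp (.snd ℝ ℝ ℝ)) p :=
    ofRealCLM.hasFDerivAt.comp p hasFDerivAt_snd
  have h : HasFDerivAt (quadExp a b c d) _ p :=
    (((((hX.pow 2).const_mul a).add ((hY.pow 2).const_mul b)).add
      (hX.const_mul c)).add (hY.const_mul d)).cexp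
  rw [h.fderiv, quadExp]
  simp only [Pi.add_apply, Nat.add_one_sub_one, pow_one, nsmul_eq_mul, Nat.cast_ofNat,
    smul_add, add_apply, smul_apply,
    ContinuousLinearMap.comp_apply, ContinuousLinearMap.coe_fst', ContinuousLinearMap.coe_snd',
    ofRealCLM_apply, smul_eq_mul]
  ring

theorem pdx_quadExp (a b c d : ℂ) (p : ℝ × ℝ) :
    pdx (quadExp a b c d) p = (2 * a * p.1 + c) * quadExp a b c d p := by
  simp [pdx, fderiv_quadExp_apply]

theorem pdy_quadExp (a b c d : ℂ) (p : ℝ × ℝ) :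
    pdy (quadExp a b c d) p = (2 * b * p.2 + d) * quadExp a b c d p := by
  simp [pdy, fderiv_quadExp_apply]

theorem phiTil_eq_quadExp (k₁ k₂ : ℝ) (z z' : ℂ) :
    phiTil k₁ k₂ z z' = quadExp (-(1 + 2 * k₂) / 4) (-(1 - 2 * k₁) / 4)
      ((z' + I * z) / Real.sqrt 2) ((z + I * z') / Real.sqrt 2) := by
  funext q
  rw [phiTil, quadExp, ← exp_add]
  ring_nf

theorem psiTil_eq_phiTil_neg (k₁ k₂ : ℝ) (z z' : ℂ) :
    psiTil k₁ k₂ z z' = phiTil (-k₁) (-k₂) z z' := by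
  funext q
  simp only [psiTil, phiTil, ofReal_neg]
  ring_nf

theorem Bdag_eq_Agll_neg (k₁ k₂ : ℝ) : Bdag k₁ k₂ = Agll (-k₁) (-k₂) := by
  funext f q
  simp only [Bdag, Agll, ofReal_neg]
  ring_nf

theorem B'dag_eq_A'gll_neg (k₁ k₂ : ℝ) : B'dag k₁ k₂ = A'gll (-k₁) (-k₂) := by
  funext f q
  simp only [B'dag, A'gll, ofReal_neg]
  ring_nf

theorem inv_sqrt_two_mul_self : (Real.sqrt 2 : ℂ)⁻¹ * (Real.sqrt 2 : ℂ)⁻¹ = 1 / 2 := by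
  rw [← mul_inv, ← ofReal_mul, Real.mul_self_sqrt zero_le_two]
  norm_num

theorem Agll_phiTil (k₁ k₂ : ℝ) (z z' : ℂ) :
    Agll k₁ k₂ (phiTil k₁ k₂ z z') = fun p => z * phiTil k₁ k₂ z z' p := by
  funext p
  simp only [Agll, phiTil_eq_quadExp, pdx_quadExp, pdy_quadExp]
  linear_combination (1 - I * I) * z * quadExp _ _ _ _ p * inv_sqrt_two_mul_self
    - z * quadExp _ _ _ _ p / 2 * I_mul_I

theorem A'gll_phiTil (k₁ k₂ : ℝ) (z z' : ℂ) :
    A'gll k₁ k₂ (phiTil k₁ k₂ z z') = fun p => z' * phiTil k₁ k₂ z z' p := by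
  funext p
  simp only [A'gll, phiTil_eq_quadExp, pdx_quadExp, pdy_quadExp]
  linear_combination (1 - I * I) * z' * quadExp _ _ _ _ p * inv_sqrt_two_mul_self
    - z' * quadExp _ _ _ _ p / 2 * I_mul_I

theorem statement15 (k₁ k₂ : ℝ) (z z' : ℂ) :
    (Agll k₁ k₂ (phiTil k₁ k₂ z z') = fun p => z * phiTil k₁ k₂ z z' p) ∧
    (A'gll k₁ k₂ (phiTil k₁ k₂ z z') = fun p => z' * phiTil k₁ k₂ z z' p) ∧
    (Bdag k₁ k₂ (psiTil k₁ k₂ z z') = fun p => z * psiTil k₁ k₂ z z' p) ∧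
    (B'dag k₁ k₂ (psiTil k₁ k₂ z z') = fun p => z' * psiTil k₁ k₂ z z' p) := by
  rw [Bdag_eq_Agll_neg, B'dag_eq_A'gll_neg, psiTil_eq_phiTil_neg]
  exact ⟨Agll_phiTil k₁ k₂ z z', A'gll_phiTil k₁ k₂ z z',
    Agll_phiTil (-k₁) (-k₂) z z', A'gll_phiTil (-k₁) (-k₂) z z'⟩
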